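/- Let σ be an involution in S_n and s ∈ {1,...,n} with s > σ(s). Then the number of t > s with (s,t) a visible inversion of σ equals |{t ≥ s : σ(t) ≤ σ(s)}| − 1, which equals the number of pairs (σ(t), t) with σ(t) < σ(s) < s < t. -/

import Mathlib

open Finset

/-- Steps of a Motzkin path: up, level, down. -/
inductive Step | U | L | D
deriving DecidableEq

instance : Fintype Step :=
  ⟨{Step.U, Step.L, Step.D}, by intro x; cases x <;> simp⟩

/-- `μ` is a Motzkin path: every prefix has at least as many `U`'s as `D`'s, and the
total numbers of `U`'s and `D`'s agree. -/
def IsMotzkin {n : ℕ} (μ : Fin n → Step) : Prop :=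
  (∀ k : Fin n, (Finset.univ.filter (fun j => j ≤ k ∧ μ j = Step.D)).card
      ≤ (Finset.univ.filter (fun j => j ≤ k ∧ μ j = Step.U)).card)
  ∧ (Finset.univ.filter (fun j => μ j = Step.U)).card
    = (Finset.univ.filter (fun j => μ j = Step.D)).card

/-- The height of the `i`-th step of `μ`: the larger of the two `y`-coordinates of
the step, i.e. `#{j ≤ i : μ j = U} − #{j < i : μ j = D}`. -/
def height {n : ℕ} (μ : Fin n → Step) (i : Fin n) : ℕ :=
  (Finset.univ.filter (fun j => j ≤ i ∧ μ j = Step.U)).card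
    - (Finset.univ.filter (fun j => j < i ∧ μ j = Step.D)).card

/-- Biane's word of an involution: `U` if `i < σ i`, `L` if `i = σ i`, `D` if `i > σ i`. -/
def bpath {n : ℕ} (σ : Equiv.Perm (Fin n)) (i : Fin n) : Step :=
  if i < σ i then Step.U else if σ i = i then Step.L else Step.D

/-- Biane's label of step `i`: `|{j ≥ i : σ j ≤ σ i}|`. -/
def blabel {n : ℕ} (σ : Equiv.Perm (Fin n)) (i : Fin n) : ℕ :=
  (Finset.univ.filter (fun j => i ≤ j ∧ σ j ≤ σ i)).card

section
variable {α β : Type*} [LinearOrder α] [LinearOrder β] [Fintype α]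

theorem filter_le_and_le_eq_insert_filter_lt_and_lt {f : α → β} (hf : Function.Injective f)
    (s : α) :
    univ.filter (fun t => s ≤ t ∧ f t ≤ f s)
      = insert s (univ.filter (fun t => s < t ∧ f t < f s)) := by
  ext t
  rcases eq_or_ne t s with rfl | hts
  · simp
  · simp [hts, le_iff_lt_or_eq, hts.symm, hf.ne hts]

theorem card_filter_le_and_le {f : α → β} (hf : Function.Injective f) (s : α) :
    #(univ.filter (fun t => s ≤ t ∧ f t ≤ f s))
      = #(univ.filter (fun t => s < t ∧ f t < f s)) + 1 := by
  rw [filter_le_and_le_eq_insert_filter_lt_and_lt hf, card_insert_of_notMem (by simp)]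

end

theorem visible_inversions_down_general {n : ℕ} (σ : Equiv.Perm (Fin n))
    (s : Fin n) (hs : σ s < s) :
    (Finset.univ.filter
        (fun t : Fin n => s < t ∧ σ t < σ s ∧ σ t ≤ min s (σ s))).card
      = (Finset.univ.filter (fun t : Fin n => s ≤ t ∧ σ t ≤ σ s)).card - 1
    ∧ (Finset.univ.filter
        (fun t : Fin n => s < t ∧ σ t < σ s ∧ σ t ≤ min s (σ s))).card
      = (Finset.univ.filter (fun t : Fin n => σ t < σ s ∧ s < t)).card := by
  have hvisible : univ.filter (fun t => s < t ∧ σ t < σ s ∧ σ t ≤ min s (σ s))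
      = univ.filter (fun t => s < t ∧ σ t < σ s) :=
    filter_congr fun t _ => by
      rw [min_eq_right hs.le]
      exact ⟨fun h => ⟨h.1, h.2.1⟩, fun h => ⟨h.1, h.2, h.2.le⟩⟩
  rw [hvisible, card_filter_le_and_le σ.injective, Nat.add_sub_cancel]
  exact ⟨rfl, congr_arg card (filter_congr fun t _ => and_comm)⟩

/-- For an involution `σ` and `s` with `σ s < s`, the number of `t > s` with `(s,t)`
a visible inversion equals `|{t ≥ s : σ t ≤ σ s}| − 1`, which equals the number of
2-cycles `(σ t, t)` with `σ t < σ s < s < t`. -/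
theorem visible_inversions_down {n : ℕ} (σ : Equiv.Perm (Fin n))
    (hinv : ∀ i, σ (σ i) = i) (s : Fin n) (hs : σ s < s) :
    (Finset.univ.filter
        (fun t : Fin n => s < t ∧ σ t < σ s ∧ σ t ≤ min s (σ s))).card
      = (Finset.univ.filter (fun t : Fin n => s ≤ t ∧ σ t ≤ σ s)).card - 1
    ∧ (Finset.univ.filter
        (fun t : Fin n => s < t ∧ σ t < σ s ∧ σ t ≤ min s (σ s))).card
      = (Finset.univ.filter (fun t : Fin n => σ t < σ s ∧ s < t)).card :=
  visible_inversions_down_general σ s hs
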